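/- arXiv:1711.03721 — 2 statements merged into one kernel-verified Lean document; each statement's English description precedes it below -/
import Mathlib

section
/- (Minkowski linear forms theorem for function fields) Let A be an n×n matrix over k_∞ with det(A) ≠ 0, defining linear forms L_1,...,L_n, and let r_1,...,r_n be integers with r_1 + ... + r_n < v(det A) + n. Then there exists a nonzero point u ∈ K^n such that v(L_i(u)) ≥ r_i for all 1 ≤ i ≤ n. -/
open FunctionField Multiplicative WithZero

variable (Fq : Type) [Field Fq] [Fintype Fq] [DecidableEq (RatFunc Fq)]

/-- The embedding of the rational function field into its completion at infinity. -/
noncomputable def embR : RatFunc Fq →+* RatFunc.CompletionAtInfty Fq :=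
  letI := RatFunc.inftyValued Fq
  UniformSpace.Completion.coeRingHom

/-- The embedding of the polynomial ring `K = Fq[T]` into `k∞`. -/
noncomputable def embP : Polynomial Fq →+* RatFunc.CompletionAtInfty Fq :=
  (embR Fq).comp (algebraMap (Polynomial Fq) (RatFunc Fq))

/-- The absolute value `|α| = q^{-v(α)}` on `k∞`. -/
noncomputable def vabs (α : RatFunc.CompletionAtInfty Fq) : ℝ :=
  if h : Valued.v α = (0 : WithZero (Multiplicative ℤ)) then 0
  else (Fintype.card Fq : ℝ) ^ (toAdd (unzero h))

/-- The distance `‖α‖` from `α` to the nearest polynomial. -/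
noncomputable def pnorm (α : RatFunc.CompletionAtInfty Fq) : ℝ :=
  ⨅ A : Polynomial Fq, vabs Fq (α - embP Fq A)

/-!
Multiplying row `i` by `T ^ rᵢ` reduces the theorem to the unit box under `|det A| < qⁿ`.
Bound the columns by `|A i j| ≤ q ^ e j`. If `∑ e j < n`, a dimension count over `F_q` produces
the point: for `m ≥ max e j`, the vectors `u` with `deg u j < m + 1 - e j` form a space of
dimension `n (m + 1) - ∑ e j > n m`, while `|Lᵢ(u)| ≤ 1` only asks the coefficients of
`T, …, Tᵐ` in the polynomial parts of the `Lᵢ(u)` to vanish, `n m` linear conditions.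
Otherwise `|det A| < q ^ ∑ e j`, so the matrix with normalized columns `A i j / T ^ e j` is
singular modulo `1/T`. A kernel vector over `F_q` gives a column operation in `GL_n(F_q[T])`
that preserves `|det A|` and lowers `∑ e j` by one; since it is unimodular, a point for the new
matrix gives one for `A`.
-/

open Polynomial

namespace Valuation

variable {R Γ₀ : Type*} [CommRing R] [LinearOrderedCommGroupWithZero Γ₀]
  (v : Valuation R Γ₀)

theorem map_prod_sub_prod_lt_one {ι : Type*} (s : Finset ι) {x y : ι → R}
    (hx : ∀ i ∈ s, v (x i) ≤ 1) (hy : ∀ i ∈ s, v (y i) ≤ 1)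
    (hxy : ∀ i ∈ s, v (x i - y i) < 1) :
    v (∏ i ∈ s, x i - ∏ i ∈ s, y i) < 1 := by
  classical
  induction s using Finset.induction_on with
  | empty => simp
  | insert a s ha ih =>
    simp only [Finset.forall_mem_insert] at hx hy hxy
    rw [Finset.prod_insert ha, Finset.prod_insert ha,
      show x a * ∏ i ∈ s, x i - y a * ∏ i ∈ s, y i =
        x a * (∏ i ∈ s, x i - ∏ i ∈ s, y i) + (x a - y a) * ∏ i ∈ s, y i by ring]
    have hprod : v (∏ i ∈ s, y i) ≤ 1 := by
      rw [map_prod]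
      exact Finset.prod_le_one' hy.2
    refine v.map_add_lt ?_ ?_ <;> rw [v.map_mul]
    · exact (mul_le_of_le_one_left' hx.1).trans_lt (ih hx.2 hy.2 hxy.2)
    · exact (mul_le_of_le_one_right' hprod).trans_lt hxy.1

theorem map_det_sub_det_lt_one {n : Type*} [Fintype n] [DecidableEq n] {X Y : Matrix n n R}
    (hX : ∀ i j, v (X i j) ≤ 1) (hY : ∀ i j, v (Y i j) ≤ 1)
    (hXY : ∀ i j, v (X i j - Y i j) < 1) :
    v (X.det - Y.det) < 1 := by
  rw [Matrix.det_apply', Matrix.det_apply', ← Finset.sum_sub_distrib]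
  refine v.map_sum_lt one_ne_zero fun σ _ => ?_
  have hsign : v ((Equiv.Perm.sign σ : ℤ) : R) = 1 := by
    rcases Int.units_eq_one_or (Equiv.Perm.sign σ) with h | h <;> simp [h]
  rw [← mul_sub, v.map_mul, hsign, one_mul]
  exact v.map_prod_sub_prod_lt_one _ (fun i _ => hX _ _) (fun i _ => hY _ _) fun i _ => hXY _ _

end Valuation

theorem Matrix.det_one_updateCol {n R : Type*} [Fintype n] [DecidableEq n] [CommRing R]
    (j : n) (w : n → R) : ((1 : Matrix n n R).updateCol j w).det = w j := by
  simpa [Matrix.one_apply] using Matrix.det_updateCol_sum (1 : Matrix n n R) j w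

theorem WithZero.prod_exp {ι M : Type*} [AddCommMonoid M] (s : Finset ι) (f : ι → M) :
    ∏ i ∈ s, exp (f i) = exp (∑ i ∈ s, f i) := by
  rw [exp, ofAdd_sum]
  exact (map_prod (WithZero.coeMonoidHom (α := Multiplicative M)) _ s).symm

theorem RatFunc.exists_inftyValuation_sub_algebraMap_lt_one {F : Type} [Field F]
    [DecidableEq (RatFunc F)] (f : RatFunc F) :
    ∃ P : F[X], inftyValuation F (f - algebraMap F[X] (RatFunc F) P) < 1 := by
  refine ⟨f.num / f.denom, ?_⟩
  have hden : algebraMap F[X] (RatFunc F) f.denom ≠ 0 := algebraMap_ne_zero f.denom_ne_zero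
  have hmod : f.num % f.denom = f.num - f.denom * (f.num / f.denom) :=
    eq_sub_of_add_eq' (EuclideanDomain.div_add_mod _ _)
  have hf : f - algebraMap F[X] (RatFunc F) (f.num / f.denom) =
      algebraMap F[X] (RatFunc F) (f.num % f.denom) / algebraMap F[X] (RatFunc F) f.denom := by
    rw [eq_div_iff hden, sub_mul, hmod, map_sub, map_mul,
      ← (div_eq_iff hden).1 (num_div_denom f)]
    ring
  rw [hf]
  rcases eq_or_ne (f.num % f.denom) 0 with h0 | h0
  · simp [h0]
  have hdeg := natDegree_lt_natDegree h0 (EuclideanDomain.mod_lt f.num f.denom_ne_zero)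
  rw [map_div₀, inftyValuation_apply, inftyValuation_apply, inftyValuation.polynomial F h0,
    inftyValuation.polynomial F f.denom_ne_zero, ← exp_sub, ← exp_zero, exp_lt_exp]
  omega

section CompletionAtInfty

variable {F : Type} [Field F] [DecidableEq (RatFunc F)]

local notation "K∞" => RatFunc.CompletionAtInfty F

-- `Valued.v` is multiplicative with `v T = exp 1`, so `|α| = q ^ log (v α)`: the additive
-- valuation `v` of the informal statement is `-log ∘ Valued.v`.
theorem valued_embR (f : RatFunc F) : Valued.v (embR F f) = RatFunc.inftyValuation F f :=
  @Valued.valuedCompletion_apply (RatFunc F) _ _ _ (RatFunc.inftyValued F) f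

theorem valued_embP {p : F[X]} (hp : p ≠ 0) : Valued.v (embP F p) = exp (p.natDegree : ℤ) :=
  (valued_embR _).trans (RatFunc.inftyValuation.polynomial F hp)

theorem one_le_valued_embP {p : F[X]} (hp : p ≠ 0) : 1 ≤ Valued.v (embP F p) := by
  simp [valued_embP hp, ← exp_zero]

theorem valued_embP_C {c : F} (hc : c ≠ 0) : Valued.v (embP F (C c)) = 1 := by
  simp [valued_embP (C_ne_zero.2 hc)]

theorem valued_embP_C_le_one (c : F) : Valued.v (embP F (C c)) ≤ 1 := by
  rcases eq_or_ne c 0 with rfl | hc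
  · simp
  · exact (valued_embP_C hc).le

theorem valued_embP_of_isUnit {p : F[X]} (hp : IsUnit p) : Valued.v (embP F p) = 1 := by
  simp [valued_embP hp.ne_zero, natDegree_eq_zero_of_isUnit hp]

theorem valued_embP_X_zpow (m : ℤ) : Valued.v (embP F X ^ m) = exp m := by
  rw [map_zpow₀, valued_embP X_ne_zero, natDegree_X, ← WithZero.exp_zsmul]
  simp

theorem embP_X_ne_zero : embP F X ≠ 0 := fun h => by
  simpa [h] using (valued_embP_X_zpow (F := F) 1).symm

theorem exists_valued_sub_embR_lt_one (α : K∞) :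
    ∃ f : RatFunc F, Valued.v (α - embR F f) < 1 := by
  have hdense : DenseRange (embR F) :=
    @UniformSpace.Completion.denseRange_coe _ (RatFunc.inftyValued F).toUniformSpace
  obtain ⟨_, hy, f, rfl⟩ := mem_closure_iff_nhds.mp (hdense α)
    {y | Valued.v (y - α) < 1} (Valued.mem_nhds.2 ⟨1, fun _ hy => by simpa using hy⟩)
  exact ⟨f, by rwa [Valuation.map_sub_swap]⟩

theorem exists_valued_sub_embP_lt_one (α : K∞) : ∃ P : F[X], Valued.v (α - embP F P) < 1 := by
  obtain ⟨f, hf⟩ := exists_valued_sub_embR_lt_one α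
  obtain ⟨P, hP⟩ := RatFunc.exists_inftyValuation_sub_algebraMap_lt_one f
  refine ⟨P, ?_⟩
  rw [← valued_embR] at hP
  have hsplit : α - embP F P = (α - embR F f) + embR F (f - algebraMap F[X] (RatFunc F) P) := by
    rw [map_sub, embP, RingHom.comp_apply]
    ring
  rw [hsplit]
  exact Valued.v.map_add_lt hf hP

noncomputable def polyPart (α : K∞) : F[X] := (exists_valued_sub_embP_lt_one α).choose

theorem valued_sub_polyPart_lt_one (α : K∞) : Valued.v (α - embP F (polyPart α)) < 1 :=
  (exists_valued_sub_embP_lt_one α).choose_spec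

theorem eq_polyPart_of_valued_sub_lt_one {α : K∞} {P : F[X]} (h : Valued.v (α - embP F P) < 1) :
    P = polyPart α := by
  by_contra hne
  have hlt : Valued.v (embP F (P - polyPart α)) < 1 := by
    simpa [map_sub] using Valued.v.map_sub_lt (valued_sub_polyPart_lt_one α) h
  exact (one_le_valued_embP (sub_ne_zero.2 hne)).not_gt hlt

theorem polyPart_add (α β : K∞) : polyPart (α + β) = polyPart α + polyPart β := by
  refine (eq_polyPart_of_valued_sub_lt_one ?_).symm
  rw [map_add, add_sub_add_comm]
  exact Valued.v.map_add_lt (valued_sub_polyPart_lt_one α) (valued_sub_polyPart_lt_one β)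

theorem polyPart_embP_C_mul (c : F) (α : K∞) :
    polyPart (embP F (C c) * α) = C c * polyPart α := by
  refine (eq_polyPart_of_valued_sub_lt_one ?_).symm
  rw [map_mul, ← mul_sub, Valued.v.map_mul]
  exact (mul_le_of_le_one_left' (valued_embP_C_le_one c)).trans_lt (valued_sub_polyPart_lt_one α)

theorem natDegree_polyPart_le {α : K∞} {m : ℕ} (h : Valued.v α ≤ exp (m : ℤ)) :
    (polyPart α).natDegree ≤ m := by
  rcases eq_or_ne (polyPart α) 0 with h0 | h0
  · simp [h0]
  have hle : Valued.v (embP F (polyPart α)) ≤ exp (m : ℤ) := by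
    rw [← sub_sub_cancel α (embP F (polyPart α))]
    exact Valued.v.map_sub_le h ((valued_sub_polyPart_lt_one α).le.trans (by simp [← exp_zero]))
  simpa [valued_embP h0] using hle

theorem exists_valued_sub_embP_C_lt_one {α : K∞} (h : Valued.v α ≤ 1) :
    ∃ c : F, Valued.v (α - embP F (C c)) < 1 := by
  refine ⟨(polyPart α).coeff 0, ?_⟩
  have hdeg := natDegree_polyPart_le (m := 0) (by simpa using h)
  rw [← eq_C_of_natDegree_eq_zero (Nat.le_zero.1 hdeg)]
  exact valued_sub_polyPart_lt_one α

theorem valued_le_one_of_coeff_polyPart_eq_zero {α : K∞} {m : ℕ}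
    (hα : Valued.v α ≤ exp (m : ℤ))
    (h : ∀ s : Fin m, (polyPart α).coeff (s + 1) = 0) : Valued.v α ≤ 1 := by
  have hC : polyPart α = C ((polyPart α).coeff 0) := by
    ext k
    rcases k with _ | k
    · simp
    rw [coeff_C_succ]
    rcases Nat.lt_or_ge k m with hkm | hmk
    · exact h ⟨k, hkm⟩
    · exact coeff_eq_zero_of_natDegree_lt ((natDegree_polyPart_le hα).trans_lt (by omega))
  have hle := Valued.v.map_add_le (valued_sub_polyPart_lt_one α).le
    (valued_embP_C_le_one ((polyPart α).coeff 0))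
  rwa [← hC, sub_add_cancel] at hle

end CompletionAtInfty

section UnitBox

open Matrix Module

variable {F : Type} [Field F] [DecidableEq (RatFunc F)] {ι : Type*} [Fintype ι]

local notation "K∞" => RatFunc.CompletionAtInfty F

def HasNonzeroPointInUnitBox (A : Matrix ι ι K∞) : Prop :=
  ∃ u : ι → F[X], u ≠ 0 ∧ ∀ i, Valued.v ((A *ᵥ (embP F ∘ u)) i) ≤ 1

noncomputable def polyPartCoeffsMulVec (A : Matrix ι ι K∞) (m : ℕ) :
    (ι → F[X]) →ₗ[F] (ι → Fin m → F) where
  toFun u i s := (polyPart ((A *ᵥ (embP F ∘ u)) i)).coeff (s + 1)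
  map_add' u w := by
    have : embP F ∘ (u + w) = embP F ∘ u + embP F ∘ w := by
      funext j
      simp
    ext i s
    simp [this, mulVec_add, polyPart_add]
  map_smul' c u := by
    have : embP F ∘ (c • u) = embP F (C c) • (embP F ∘ u) := by
      funext j
      simp [Polynomial.smul_eq_C_mul]
    ext i s
    simp [this, mulVec_smul, polyPart_embP_C_mul]

theorem hasNonzeroPointInUnitBox_of_sum_lt_card {A : Matrix ι ι K∞} {e : ι → ℤ}
    (hA : ∀ i j, Valued.v (A i j) ≤ exp (e j)) (he : ∑ j, e j < Fintype.card ι) :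
    HasNonzeroPointInUnitBox A := by
  obtain ⟨M, hM⟩ := Finite.exists_le e
  set m := M.toNat
  set d : ι → ℕ := fun j => (m + 1 - e j).toNat
  have hd : ∀ j, (d j : ℤ) = m + 1 - e j := fun j =>
    Int.toNat_of_nonneg (by linarith [hM j, Int.self_le_toNat M])
  let P : (Π j, Fin (d j) → F) →ₗ[F] (ι → F[X]) := LinearMap.pi fun j =>
    (degreeLT F (d j)).subtype ∘ₗ (degreeLTEquiv F (d j)).symm.toLinearMap ∘ₗ
      LinearMap.proj j
  have hP_inj : Function.Injective P := fun x y hxy => funext fun j =>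
    (degreeLTEquiv F (d j)).symm.injective (Subtype.ext (congr_fun hxy j))
  have hP_deg : ∀ x j, (P x j).degree < d j := fun x j =>
    mem_degreeLT.1 ((degreeLTEquiv F (d j)).symm (x j)).2
  have hdim : finrank F (ι → Fin m → F) < finrank F (Π j, Fin (d j) → F) := by
    simp only [finrank_pi_fintype, finrank_self, Fintype.card_fin, Finset.sum_const,
      Finset.card_univ, smul_eq_mul, mul_one]
    zify
    rw [Finset.sum_congr rfl fun j _ => hd j]
    simp only [Finset.sum_sub_distrib, Finset.sum_const, Finset.card_univ, nsmul_eq_mul]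
    linarith
  obtain ⟨x, hx, hx0⟩ := (Submodule.ne_bot_iff _).1
    (LinearMap.ker_ne_bot_of_finrank_lt (f := polyPartCoeffsMulVec A m ∘ₗ P) hdim)
  refine ⟨P x, fun h => hx0 (hP_inj (h.trans (map_zero P).symm)), fun i => ?_⟩
  refine valued_le_one_of_coeff_polyPart_eq_zero (m := m) ?_ (congr_fun (congr_fun hx i))
  refine Valued.v.map_sum_le fun j _ => ?_
  rcases eq_or_ne (P x j) 0 with h0 | h0
  · simp [h0]
  have hdeg := (natDegree_lt_iff_degree_lt h0).2 (hP_deg x j)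
  rw [Function.comp_apply, Valued.v.map_mul, valued_embP h0]
  calc _ ≤ exp (e j) * exp (d j - 1 : ℤ) := mul_le_mul' (hA i j) (exp_le_exp.2 (by omega))
    _ = exp (m : ℤ) := by rw [← exp_add, hd j]; ring_nf

variable [DecidableEq ι]

theorem HasNonzeroPointInUnitBox.of_mul_map {A : Matrix ι ι K∞} {W : Matrix ι ι F[X]}
    (hW : W.det ≠ 0) (h : HasNonzeroPointInUnitBox (A * W.map (embP F))) :
    HasNonzeroPointInUnitBox A := by
  obtain ⟨u, hu0, hu⟩ := h
  refine ⟨W *ᵥ u, fun h0 => hu0 (eq_zero_of_mulVec_eq_zero hW h0), fun i => ?_⟩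
  have hmap : embP F ∘ (W *ᵥ u) = W.map (embP F) *ᵥ (embP F ∘ u) :=
    funext (RingHom.map_mulVec (embP F) W u)
  rw [hmap, mulVec_mulVec]
  exact hu i

theorem exists_ne_zero_valued_mulVec_embP_C_lt_one {B : Matrix ι ι K∞}
    (hB : ∀ i j, Valued.v (B i j) ≤ 1) (hdet : Valued.v B.det < 1) :
    ∃ c : ι → F, c ≠ 0 ∧ ∀ i, Valued.v ((B *ᵥ fun j => embP F (C (c j))) i) < 1 := by
  -- `b` is the reduction of `B` modulo `1/T`; it is singular because `|det B| < 1`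
  choose b hb using fun i j => exists_valued_sub_embP_C_lt_one (hB i j)
  let κ : F →+* K∞ := (embP F).comp C
  have hdet_b : (Matrix.of b).det = 0 := by
    by_contra hne
    have hsub := Valued.v.map_det_sub_det_lt_one (Y := (Matrix.of b).map κ) hB
      (fun i j => valued_embP_C_le_one (b i j)) hb
    have hlt := Valued.v.map_sub_lt hdet hsub
    rw [sub_sub_cancel, show ((Matrix.of b).map κ).det = κ (Matrix.of b).det from
      (RingHom.map_det κ _).symm] at hlt
    exact (valued_embP_C hne).not_lt hlt
  obtain ⟨c, hc0, hbc⟩ := exists_mulVec_eq_zero_iff.2 hdet_b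
  refine ⟨c, hc0, fun i => ?_⟩
  have hsplit : (B *ᵥ fun j => κ (c j)) i =
      ((B - (Matrix.of b).map κ) *ᵥ fun j => κ (c j)) i := by
    rw [sub_mulVec, Pi.sub_apply, ← Function.comp_def κ c, ← RingHom.map_mulVec, hbc]
    simp
  refine hsplit ▸ Valued.v.map_sum_lt one_ne_zero fun j _ => ?_
  rw [Valued.v.map_mul]
  exact (mul_le_of_le_one_right' (valued_embP_C_le_one _)).trans_lt (hb i j)

theorem exists_unimodular_column_step {A : Matrix ι ι K∞} {e : ι → ℤ}
    (hA : ∀ i j, Valued.v (A i j) ≤ exp (e j)) {c : ι → F} (hc0 : c ≠ 0)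
    (hc : ∀ i, Valued.v ((A *ᵥ fun j => embP F X ^ (-e j) * embP F (C (c j))) i) < 1) :
    ∃ (W : Matrix ι ι F[X]) (e' : ι → ℤ), IsUnit W.det ∧
      (∀ i j, Valued.v ((A * W.map (embP F)) i j) ≤ exp (e' j)) ∧
      ∑ j, e' j = ∑ j, e j - 1 := by
  classical
  -- `j₀` maximizes `e` on the support of `c`, so the exponents `e j₀ - e j` in `w` are `≥ 0`
  obtain ⟨j₀, hj₀, hmax⟩ := Finset.exists_max_image (Finset.univ.filter (c · ≠ 0)) e
    (by simpa [Finset.filter_nonempty_iff, funext_iff] using hc0)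
  have hcj₀ : c j₀ ≠ 0 := (Finset.mem_filter.1 hj₀).2
  let w : ι → F[X] := fun j => C (c j) * X ^ (e j₀ - e j).toNat
  let W : Matrix ι ι F[X] := (1 : Matrix ι ι F[X]).updateCol j₀ w
  have hdetW : W.det = C (c j₀) := by simp [W, w, det_one_updateCol]
  have hw : ∀ j, embP F (w j) = embP F X ^ e j₀ * (embP F X ^ (-e j) * embP F (C (c j))) := by
    intro j
    rcases eq_or_ne (c j) 0 with h | h
    · simp [w, h]
    · have hle : e j ≤ e j₀ := hmax j (by simp [h])
      rw [map_mul, map_pow, ← zpow_natCast, Int.toNat_of_nonneg (by omega), ← mul_assoc,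
        ← zpow_add₀ embP_X_ne_zero, mul_comm]
      ring_nf
  have hAW : A * W.map (embP F) = A.updateCol j₀ (A *ᵥ (embP F ∘ w)) := by
    rw [map_updateCol, Matrix.map_one _ (embP F).map_zero (embP F).map_one, mul_updateCol, mul_one]
  refine ⟨W, Function.update e j₀ (e j₀ - 1), hdetW ▸ isUnit_C.2 hcj₀.isUnit,
    fun i j => ?_, ?_⟩
  · rw [hAW]
    rcases eq_or_ne j j₀ with rfl | hj
    · have hcol : (A *ᵥ (embP F ∘ w)) i =
          embP F X ^ e j * (A *ᵥ fun j' => embP F X ^ (-e j') * embP F (C (c j'))) i := by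
        simp only [mulVec, dotProduct, Function.comp_apply, hw, Finset.mul_sum]
        exact Finset.sum_congr rfl fun _ _ => by ring
      rw [updateCol_self, Function.update_self, hcol, Valued.v.map_mul, valued_embP_X_zpow,
        ← lt_mul_exp_iff_le exp_ne_zero, ← exp_add, sub_add_cancel]
      exact mul_lt_of_lt_one_right exp_pos (hc i)
    · rw [updateCol_ne hj, Function.update_of_ne hj]
      exact hA i j
  · rw [Finset.sum_update_of_mem (Finset.mem_univ _),
      ← Finset.add_sum_erase _ _ (Finset.mem_univ j₀), Finset.sdiff_singleton_eq_erase]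
    ring

theorem exists_unimodular_reduction {A : Matrix ι ι K∞} {e : ι → ℤ}
    (hA : ∀ i j, Valued.v (A i j) ≤ exp (e j)) (hdet : Valued.v A.det < exp (∑ j, e j)) :
    ∃ (W : Matrix ι ι F[X]) (e' : ι → ℤ), IsUnit W.det ∧
      (∀ i j, Valued.v ((A * W.map (embP F)) i j) ≤ exp (e' j)) ∧
      ∑ j, e' j = ∑ j, e j - 1 := by
  set B := A * diagonal fun j => embP F X ^ (-e j) with hBdef
  have hB : ∀ i j, Valued.v (B i j) ≤ 1 := by
    intro i j
    rw [hBdef, mul_diagonal, Valued.v.map_mul, valued_embP_X_zpow, ← exp_zero,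
      ← add_neg_cancel (e j), exp_add]
    exact mul_le_mul_left (hA i j) _
  have hBdet : Valued.v B.det < 1 := by
    rw [hBdef, det_mul, det_diagonal, Valued.v.map_mul, map_prod]
    simp only [valued_embP_X_zpow]
    rw [WithZero.prod_exp, Finset.sum_neg_distrib, ← exp_zero, ← add_neg_cancel (∑ j, e j),
      exp_add]
    exact mul_lt_mul_of_pos_right hdet exp_pos
  obtain ⟨c, hc0, hc⟩ := exists_ne_zero_valued_mulVec_embP_C_lt_one hB hBdet
  refine exists_unimodular_column_step hA hc0 fun i => ?_
  have hdiag : ((diagonal fun j => embP F X ^ (-e j)) *ᵥ fun j => embP F (C (c j))) =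
      fun j => embP F X ^ (-e j) * embP F (C (c j)) :=
    funext fun j => mulVec_diagonal _ _ j
  simpa only [hBdef, ← mulVec_mulVec, hdiag] using hc i

theorem hasNonzeroPointInUnitBox_of_valued_det_lt {A : Matrix ι ι K∞}
    (hA : Valued.v A.det < exp (Fintype.card ι : ℤ)) : HasNonzeroPointInUnitBox A := by
  obtain ⟨e, hAe⟩ : ∃ e : ι → ℤ, ∀ i j, Valued.v (A i j) ≤ exp (e j) := by
    choose e he using fun j => Finite.exists_le fun i => log (Valued.v (A i j))
    exact ⟨e, fun i j => le_exp_of_log_le (he j i)⟩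
  obtain ⟨N, hN⟩ : ∃ N : ℕ, ∑ j, e j < Fintype.card ι + N :=
    ⟨(∑ j, e j - Fintype.card ι + 1).toNat, by omega⟩
  induction N generalizing A e with
  | zero => exact hasNonzeroPointInUnitBox_of_sum_lt_card hAe (by simpa using hN)
  | succ N ih =>
    by_cases hlt : ∑ j, e j < Fintype.card ι
    · exact hasNonzeroPointInUnitBox_of_sum_lt_card hAe hlt
    obtain ⟨W, e', hW, hAe', he'⟩ :=
      exists_unimodular_reduction hAe (hA.trans_le (exp_le_exp.2 (not_lt.1 hlt)))
    refine .of_mul_map hW.ne_zero (ih ?_ e' hAe' (by omega))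
    rwa [det_mul, ← show embP F W.det = (W.map (embP F)).det from RingHom.map_det _ _,
      Valued.v.map_mul, valued_embP_of_isUnit hW, mul_one]

theorem exists_ne_zero_valued_mulVec_le (A : Matrix ι ι K∞) (r : ι → ℤ)
    (hA : Valued.v A.det < exp (Fintype.card ι - ∑ i, r i)) :
    ∃ u : ι → F[X], u ≠ 0 ∧
      ∀ i, Valued.v ((A *ᵥ (embP F ∘ u)) i) ≤ exp (-r i) := by
  set D : Matrix ι ι K∞ := diagonal fun i => embP F X ^ r i with hD
  have hDA : Valued.v (D * A).det < exp (Fintype.card ι : ℤ) := by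
    rw [hD, det_mul, det_diagonal, Valued.v.map_mul, map_prod]
    simp only [valued_embP_X_zpow]
    rw [WithZero.prod_exp, ← add_sub_cancel (∑ i, r i) (Fintype.card ι : ℤ), exp_add]
    exact mul_lt_mul_of_pos_left hA exp_pos
  obtain ⟨u, hu0, hu⟩ := hasNonzeroPointInUnitBox_of_valued_det_lt hDA
  refine ⟨u, hu0, fun i => ?_⟩
  have hi := hu i
  rw [← mulVec_mulVec, hD, mulVec_diagonal, Valued.v.map_mul, valued_embP_X_zpow,
    ← exp_zero, ← add_neg_cancel (r i), exp_add] at hi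
  exact le_of_mul_le_mul_left hi exp_pos

end UnitBox

section AbsoluteValue

variable {Fq}

theorem vabs_of_ne_zero {α : RatFunc.CompletionAtInfty Fq} (hα : α ≠ 0) :
    vabs Fq α = (Fintype.card Fq : ℝ) ^ log (Valued.v α) := by
  rw [vabs, dif_neg ((Valuation.ne_zero_iff _).2 hα), toAdd_unzero_eq_log]

theorem vabs_le_zpow_iff {α : RatFunc.CompletionAtInfty Fq} {m : ℤ} :
    vabs Fq α ≤ (Fintype.card Fq : ℝ) ^ m ↔ Valued.v α ≤ exp m := by
  rcases eq_or_ne α 0 with rfl | hα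
  · simp only [vabs, map_zero, dite_true]
    exact iff_of_true (by positivity) zero_le
  rw [vabs_of_ne_zero hα, zpow_le_zpow_iff_right₀ (by exact_mod_cast Fintype.one_lt_card),
    log_le_iff_le_exp ((Valuation.ne_zero_iff _).2 hα)]

theorem vabs_lt_zpow_iff {α : RatFunc.CompletionAtInfty Fq} {m : ℤ} :
    vabs Fq α < (Fintype.card Fq : ℝ) ^ m ↔ Valued.v α < exp m := by
  rcases eq_or_ne α 0 with rfl | hα
  · simp only [vabs, map_zero, dite_true]
    exact iff_of_true (by positivity) exp_pos
  rw [vabs_of_ne_zero hα, zpow_lt_zpow_iff_right₀ (by exact_mod_cast Fintype.one_lt_card),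
    log_lt_iff_lt_exp ((Valuation.ne_zero_iff _).2 hα)]

end AbsoluteValue

theorem stmt5 (n : ℕ) (A : Matrix (Fin n) (Fin n) (RatFunc.CompletionAtInfty Fq))
    (r : Fin n → ℤ) (hr : vabs Fq A.det < (Fintype.card Fq : ℝ) ^ ((n : ℤ) - ∑ i, r i)) :
    ∃ u : Fin n → Polynomial Fq, u ≠ 0 ∧
      ∀ i, vabs Fq (∑ j, A i j * embP Fq (u j)) ≤ (Fintype.card Fq : ℝ) ^ (-(r i)) := by
  obtain ⟨u, hu0, hu⟩ := exists_ne_zero_valued_mulVec_le A r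
    (by simpa only [Fintype.card_fin] using vabs_lt_zpow_iff.1 hr)
  exact ⟨u, hu0, fun i => vabs_le_zpow_iff.2 (hu i)⟩
end

section
/- Let θ_1,...,θ_n ∈ k_∞ and H ∈ k_∞ with |H| ≥ 1. Then there exists a nonzero tuple (x_1,...,x_n) ∈ K^n such that ‖x_1θ_1 + ... + x_nθ_n‖ ≤ q^{-n}|H|^{-n} and 1 ≤ max_i |x_i| ≤ |H|. -/
open FunctionField Multiplicative WithZero

variable (Fq : Type) [Field Fq] [Fintype Fq] [DecidableEq (RatFunc Fq)]

/-
Write `|H| = q ^ h` and `N = n (h + 1)`. Approximate each `θ i` to within `q ^ -(N + h)` by a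
rational function `f i / g` with a common monic denominator `g`. Among the `q ^ N` tuples `y` of
polynomials of degree `≤ h`, two give remainders `(∑ y i * f i) %ₘ g` agreeing in their top
`N - 1` coefficients; their difference `y` makes the fractional part of `∑ y i * f i / g` at most
`q ^ -N`. The errors `|y i| |θ i - f i / g|` are below `q ^ -N` as well, so by the ultrametric
inequality `‖∑ y i θ i‖ ≤ q ^ -N = q ^ -n |H| ^ -n`.
-/

open Polynomial
open scoped WithZeroTopology

section Pigeonhole

variable {R : Type*} [CommRing R]

theorem Polynomial.degree_add_le_of_coeff_eq_zero {P : R[X]} {m k : ℕ} (hP : P.degree < m)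
    (hcoeff : ∀ j < k, P.coeff (m - 1 - j) = 0) : P.degree + (k + 1 : ℕ) ≤ m := by
  rcases eq_or_ne P 0 with rfl | hP0
  · simp
  rw [degree_eq_natDegree hP0, Nat.cast_lt] at hP
  rw [degree_eq_natDegree hP0, ← Nat.cast_add, Nat.cast_le]
  by_contra! hk
  have := hcoeff (m - 1 - P.natDegree) (by omega)
  rw [show m - 1 - (m - 1 - P.natDegree) = P.natDegree by omega, coeff_natDegree,
    leadingCoeff_eq_zero] at this
  exact hP0 this

theorem Polynomial.exists_ne_zero_degree_lt_and_degree_sum_mul_modByMonic_add_le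
    [Fintype R] [Nontrivial R] {n d : ℕ} (hnd : 0 < n * d) (f : Fin n → R[X]) {g : R[X]}
    (hg : g.Monic) :
    ∃ y : Fin n → R[X], y ≠ 0 ∧ (∀ i, (y i).degree < d) ∧
      ((∑ i, y i * f i) %ₘ g).degree + (n * d : ℕ) ≤ g.degree := by
  classical
  let poly (x : Fin n → Fin d → R) (i : Fin n) : R[X] := (degreeLTEquiv R d).symm (x i)
  let rem (x : Fin n → Fin d → R) : R[X] := (∑ i, poly x i * f i) %ₘ g
  let top (x : Fin n → Fin d → R) (j : Fin (n * d - 1)) : R := (rem x).coeff (g.natDegree - 1 - j)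
  have hcard : Fintype.card (Fin (n * d - 1) → R) < Fintype.card (Fin n → Fin d → R) := by
    simp only [Fintype.card_fun, Fintype.card_fin, ← pow_mul]
    exact Nat.pow_lt_pow_right Fintype.one_lt_card (by rw [Nat.mul_comm d n]; omega)
  obtain ⟨x, x', hne, htop⟩ := Fintype.exists_ne_map_eq_of_card_lt top hcard
  have hrem : (∑ i, (poly x - poly x') i * f i) %ₘ g = rem x - rem x' := by
    simp only [rem, Pi.sub_apply, sub_mul, Finset.sum_sub_distrib, sub_modByMonic]
  refine ⟨poly x - poly x', fun h => hne ?_, fun i => ?_, ?_⟩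
  · funext i
    exact (degreeLTEquiv R d).symm.injective (Subtype.ext (sub_eq_zero.1 (congrFun h i)))
  · exact mem_degreeLT.1 (Submodule.sub_mem _ ((degreeLTEquiv R d).symm (x i)).2
      ((degreeLTEquiv R d).symm (x' i)).2)
  · have hdeg : (rem x - rem x').degree < g.natDegree := by
      rw [← hrem, ← degree_eq_natDegree hg.ne_zero]
      exact degree_modByMonic_lt _ hg
    have := degree_add_le_of_coeff_eq_zero hdeg (k := n * d - 1) fun j hj => by
      simpa [top, sub_eq_zero] using congrFun htop ⟨j, hj⟩
    rwa [hrem, degree_eq_natDegree hg.ne_zero, show n * d = n * d - 1 + 1 by omega]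

end Pigeonhole

theorem RatFunc.exists_monic_common_denom {K : Type*} [Field K] {ι : Type*} [Fintype ι]
    (r : ι → RatFunc K) :
    ∃ (f : ι → K[X]) (g : K[X]), g.Monic ∧
      ∀ i, algebraMap K[X] (RatFunc K) (f i) / algebraMap K[X] (RatFunc K) g = r i := by
  classical
  refine ⟨fun i => (r i).num * ∏ j ∈ Finset.univ.erase i, (r j).denom, ∏ j, (r j).denom,
    monic_prod_of_monic _ _ fun j _ => RatFunc.monic_denom _, fun i => ?_⟩
  have hc : algebraMap K[X] (RatFunc K) (∏ j ∈ Finset.univ.erase i, (r j).denom) ≠ 0 :=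
    RatFunc.algebraMap_ne_zero (Finset.prod_ne_zero_iff.2 fun j _ => RatFunc.denom_ne_zero _)
  rw [← Finset.mul_prod_erase Finset.univ (fun j => (r j).denom) (Finset.mem_univ i),
    map_mul, map_mul, mul_div_mul_right _ _ hc, RatFunc.num_div_denom]

local notation "q" => (Fintype.card Fq : ℝ)

lemma vabs_nonneg (α : RatFunc.CompletionAtInfty Fq) : 0 ≤ vabs Fq α := by
  unfold vabs; split <;> positivity

lemma vabs_of_valuation_eq_exp {α : RatFunc.CompletionAtInfty Fq} {m : ℤ}
    (h : Valued.v α = exp m) : vabs Fq α = q ^ m := by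
  rw [vabs, dif_neg (h ▸ exp_ne_zero), toAdd_unzero_eq_log, h, log_exp]

lemma vabs_le_zpow_of_valuation_le {α : RatFunc.CompletionAtInfty Fq} {m : ℤ}
    (h : Valued.v α ≤ exp m) : vabs Fq α ≤ q ^ m := by
  by_cases h0 : Valued.v α = 0
  · rw [vabs, dif_pos h0]; positivity
  · rw [vabs_of_valuation_eq_exp Fq (exp_log h0).symm]
    exact zpow_le_zpow_right₀ (by exact_mod_cast Fintype.card_pos) ((log_le_iff_le_exp h0).2 h)

lemma exists_nat_valuation_eq_exp_of_one_le_vabs {α : RatFunc.CompletionAtInfty Fq}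
    (h : 1 ≤ vabs Fq α) : ∃ d : ℕ, Valued.v α = exp (d : ℤ) := by
  have h0 : Valued.v α ≠ 0 := fun h0 => by rw [vabs, dif_pos h0] at h; linarith
  have hlog : 0 ≤ log (Valued.v α) := by
    rw [vabs_of_valuation_eq_exp Fq (exp_log h0).symm] at h
    exact (one_le_zpow_iff_right₀ (by exact_mod_cast Fintype.one_lt_card)).1 h
  exact ⟨(log (Valued.v α)).toNat, by rw [Int.toNat_of_nonneg hlog, exp_log h0]⟩

lemma pnorm_le_vabs_sub (α : RatFunc.CompletionAtInfty Fq) (A : Fq[X]) :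
    pnorm Fq α ≤ vabs Fq (α - embP Fq A) :=
  ciInf_le ⟨0, by rintro _ ⟨B, rfl⟩; exact vabs_nonneg Fq _⟩ A

omit [Fintype Fq] in
lemma valuation_embR (r : RatFunc Fq) : Valued.v (embR Fq r) = RatFunc.inftyValuation Fq r :=
  let := RatFunc.inftyValued Fq
  Valued.valuedCompletion_apply r

omit [Fintype Fq] in
lemma valuation_embP {p : Fq[X]} (hp : p ≠ 0) : Valued.v (embP Fq p) = exp (p.natDegree : ℤ) :=
  (valuation_embR Fq _).trans (RatFunc.inftyValuation.polynomial Fq hp)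

omit [Fintype Fq] in
lemma valuation_embP_le {p : Fq[X]} {d : ℕ} (hp : p.degree ≤ d) :
    Valued.v (embP Fq p) ≤ exp (d : ℤ) := by
  rcases eq_or_ne p 0 with rfl | hp0
  · simp
  rw [valuation_embP Fq hp0, exp_le_exp, Nat.cast_le]
  exact natDegree_le_iff_degree_le.2 hp

omit [Fintype Fq] in
lemma valuation_embP_div_le {p g : Fq[X]} {N : ℕ} (hg : g ≠ 0) (h : p.degree + N ≤ g.degree) :
    Valued.v (embP Fq p / embP Fq g) ≤ exp (-(N : ℤ)) := by
  rcases eq_or_ne p 0 with rfl | hp0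
  · simp
  rw [degree_eq_natDegree hp0, degree_eq_natDegree hg, ← Nat.cast_add, Nat.cast_le] at h
  rw [map_div₀, valuation_embP Fq hp0, valuation_embP Fq hg, ← exp_sub, exp_le_exp]
  omega

lemma one_le_vabs_embP {p : Fq[X]} (hp : p ≠ 0) : 1 ≤ vabs Fq (embP Fq p) := by
  rw [vabs_of_valuation_eq_exp Fq (valuation_embP Fq hp)]
  exact one_le_zpow₀ (by exact_mod_cast Fintype.card_pos) (Nat.cast_nonneg _)

omit [Fintype Fq] in
lemma valuation_surjective :
    Function.Surjective (Valued.v : RatFunc.CompletionAtInfty Fq → ℤᵐ⁰) := by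
  intro γ
  rcases eq_or_ne γ 0 with rfl | hγ
  · exact ⟨0, map_zero _⟩
  · refine ⟨embR Fq (RatFunc.X ^ log γ), ?_⟩
    rw [valuation_embR, RatFunc.inftyValuation.X_zpow, exp_log hγ]

omit [Fintype Fq] in
lemma exists_valuation_sub_embR_lt (α : RatFunc.CompletionAtInfty Fq) {γ : ℤᵐ⁰} (hγ : γ ≠ 0) :
    ∃ r : RatFunc Fq, Valued.v (α - embR Fq r) < γ := by
  let := RatFunc.inftyValued Fq
  have hopen : IsOpen {y : RatFunc.CompletionAtInfty Fq | Valued.v (α - y) < γ} :=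
    WithZeroTopology.isOpen_Iio.preimage
      ((Valued.continuous_valuation_of_surjective (valuation_surjective Fq)).comp
        (continuous_const.sub continuous_id))
  exact UniformSpace.Completion.denseRange_coe.exists_mem_open hopen
    ⟨α, show Valued.v (α - α) < γ by rw [sub_self, map_zero]; exact zero_lt_iff.2 hγ⟩

theorem exists_valuation_sum_mul_sub_embP_le {n : ℕ} (hn : 0 < n)
    (θ : Fin n → RatFunc.CompletionAtInfty Fq) (h : ℕ) :
    ∃ y : Fin n → Fq[X], y ≠ 0 ∧ (∀ i, (y i).degree ≤ h) ∧ ∃ Q : Fq[X],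
      Valued.v (∑ i, embP Fq (y i) * θ i - embP Fq Q) ≤ exp (-((n * (h + 1) : ℕ) : ℤ)) := by
  set N := n * (h + 1)
  choose r hr using fun i =>
    exists_valuation_sub_embR_lt Fq (θ i) (exp_ne_zero (a := -((N + h : ℕ) : ℤ)))
  obtain ⟨f, g, hg, hfg⟩ := RatFunc.exists_monic_common_denom r
  obtain ⟨y, hy0, hdeg, hrem⟩ :=
    exists_ne_zero_degree_lt_and_degree_sum_mul_modByMonic_add_le (d := h + 1) (by positivity) f hg
  have hdeg' : ∀ i, (y i).degree ≤ h := fun i => Order.le_of_lt_succ (hdeg i)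
  set S := ∑ i, y i * f i
  refine ⟨y, hy0, hdeg', S /ₘ g, ?_⟩
  have hsplit : ∑ i, embP Fq (y i) * θ i - embP Fq (S /ₘ g) =
      ∑ i, embP Fq (y i) * (θ i - embR Fq (r i)) + embP Fq (S %ₘ g) / embP Fq g := by
    have hr_eq : ∀ i, embR Fq (r i) = embP Fq (f i) / embP Fq g := fun i => by
      rw [← hfg i, map_div₀]; rfl
    have hS := congrArg (embP Fq) (modByMonic_add_div S g)
    have hg0 : embP Fq g ≠ 0 :=
      (_root_.map_ne_zero (embR Fq)).2 (RatFunc.algebraMap_ne_zero hg.ne_zero)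
    simp only [S, map_add, map_mul, map_sum] at hS
    simp only [hr_eq, mul_sub, Finset.sum_sub_distrib, ← mul_div_assoc, ← Finset.sum_div, ← hS]
    field_simp
    ring
  rw [hsplit]
  refine (Valuation.map_add _ _ _).trans (max_le (Valuation.map_sum_le _ fun i _ => ?_)
    (valuation_embP_div_le Fq hg.ne_zero hrem))
  calc Valued.v (embP Fq (y i) * (θ i - embR Fq (r i)))
      ≤ exp (h : ℤ) * exp (-((N + h : ℕ) : ℤ)) := by
        rw [Valuation.map_mul]
        exact mul_le_mul' (valuation_embP_le Fq (hdeg' i)) (hr i).le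
    _ = exp (-(N : ℤ)) := by rw [← exp_add]; push_cast; ring_nf

theorem stmt10 (n : ℕ) (hn : 0 < n) (θ : Fin n → RatFunc.CompletionAtInfty Fq) (H : RatFunc.CompletionAtInfty Fq)
    (hH : 1 ≤ vabs Fq H) :
    ∃ x : Fin n → Polynomial Fq, x ≠ 0 ∧
      pnorm Fq (∑ i, embP Fq (x i) * θ i) ≤
        (Fintype.card Fq : ℝ) ^ (-(n : ℤ)) * (vabs Fq H) ^ (-(n : ℤ)) ∧
      (1 ≤ ⨆ i, vabs Fq (embP Fq (x i))) ∧ (⨆ i, vabs Fq (embP Fq (x i))) ≤ vabs Fq H := by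
  obtain ⟨h, hvH⟩ := exists_nat_valuation_eq_exp_of_one_le_vabs Fq hH
  obtain ⟨x, hx0, hdeg, Q, hQ⟩ := exists_valuation_sum_mul_sub_embP_le Fq hn θ h
  have hbound : q ^ (-(n : ℤ)) * vabs Fq H ^ (-(n : ℤ)) = q ^ (-((n * (h + 1) : ℕ) : ℤ)) := by
    rw [vabs_of_valuation_eq_exp Fq hvH, ← zpow_mul, ← zpow_add₀ (by positivity)]
    push_cast; ring_nf
  refine ⟨x, hx0, ?_, ?_, ?_⟩
  · rw [hbound]
    exact (pnorm_le_vabs_sub Fq _ Q).trans (vabs_le_zpow_of_valuation_le Fq hQ)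
  · obtain ⟨i, hi⟩ := Function.ne_iff.1 hx0
    exact (one_le_vabs_embP Fq hi).trans (le_ciSup (f := fun i => vabs Fq (embP Fq (x i))) (Set.finite_range _).bddAbove i)
  · rw [vabs_of_valuation_eq_exp Fq hvH]
    exact Real.iSup_le (fun i => vabs_le_zpow_of_valuation_le Fq (valuation_embP_le Fq (hdeg i)))
      (by positivity)
end
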